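/- Let I be a database, I' its ∼-quotient with respect to ALCQ bisimilarity, and P, N ⊆ adom(I). An ALCQ concept C fits P, N in I if and only if C fits {⟨[p],1⟩ | p ∈ P}, {⟨[n],1⟩ | n ∈ N} in I'. -/

import Mathlib

structure DB (CN RN Ind : Type) where
  concFact : CN → Ind → Prop
  roleFact : RN → Ind → Ind → Prop
  adom : Set Ind

def DB.succ {CN RN Ind : Type} (I : DB CN RN Ind) (r : RN) (a : Ind) : Set Ind :=
  {b | I.roleFact r a b}

def IsALCQBisim {CN RN Ind : Type} (I : DB CN RN Ind) (S : Ind → Ind → Prop) : Prop :=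
  (∀ a b, S a b → a ∈ I.adom ∧ b ∈ I.adom) ∧
  ∀ a b, S a b →
    (∀ A, I.concFact A a ↔ I.concFact A b) ∧
    (∀ r, ∀ D ⊆ I.succ r a, ∃ E ⊆ I.succ r b, ∃ f : Ind → Ind,
        Set.BijOn f D E ∧ ∀ d ∈ D, S d (f d)) ∧
    (∀ r, ∀ E ⊆ I.succ r b, ∃ D ⊆ I.succ r a, ∃ f : Ind → Ind,
        Set.BijOn f D E ∧ ∀ d ∈ D, S d (f d))

inductive ALCQ (CN RN : Type) : Type where
  | top : ALCQ CN RN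
  | atom (A : CN) : ALCQ CN RN
  | neg (C : ALCQ CN RN) : ALCQ CN RN
  | inter (C D : ALCQ CN RN) : ALCQ CN RN
  | ge (n : ℕ) (r : RN) (C : ALCQ CN RN) : ALCQ CN RN
  | le (n : ℕ) (r : RN) (C : ALCQ CN RN) : ALCQ CN RN

def ALCQ.sem {CN RN Ind : Type} (I : DB CN RN Ind) : ALCQ CN RN → Set Ind
  | .top => I.adom
  | .atom A => {a ∈ I.adom | I.concFact A a}
  | .neg C => I.adom \ C.sem I
  | .inter C D => C.sem I ∩ D.sem I
  | .ge n r C => {a ∈ I.adom | n ≤ (I.succ r a ∩ C.sem I).ncard}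
  | .le n r C => {a ∈ I.adom | (I.succ r a ∩ C.sem I).ncard ≤ n}

def Fits {CN RN Ind : Type} (I : DB CN RN Ind) (C : ALCQ CN RN)
    (P N : Set Ind) : Prop :=
  (∀ a ∈ P, a ∈ C.sem I) ∧ ∀ b ∈ N, b ∉ C.sem I

/-- `a` and `b` are ALCQ-bisimilar in `I`. -/
def Bisimilar {CN RN Ind : Type} (I : DB CN RN Ind) (a b : Ind) : Prop :=
  ∃ S : Ind → Ind → Prop, IsALCQBisim I S ∧ S a b

/-- The equivalence class `[a]` of `a` under the maximal ALCQ bisimulation. -/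
def cls {CN RN Ind : Type} (I : DB CN RN Ind) (a : Ind) : Set Ind :=
  {b | Bisimilar I a b}

/-- `max_{b ∈ adom(I), r} |succ_I^r(b) ∩ X|`. -/
noncomputable def maxCnt {CN RN Ind : Type} (I : DB CN RN Ind) (X : Set Ind) : ℕ :=
  sSup {n | ∃ b ∈ I.adom, ∃ r : RN, n = (I.succ r b ∩ X).ncard}

/-- The domain of the ∼-quotient: pairs `⟨[a], i⟩` with `1 ≤ i ≤ max_{b,r} |succ_I^r(b) ∩ [a]|`
(at least the copy `i = 1` is always present). -/
def qadom {CN RN Ind : Type} (I : DB CN RN Ind) : Set (Set Ind × ℕ) :=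
  {p | ∃ a ∈ I.adom, p.1 = cls I a ∧ 1 ≤ p.2 ∧ p.2 ≤ max 1 (maxCnt I p.1)}

/-- The ∼-quotient database `I'`. -/
noncomputable def quotDB {CN RN Ind : Type} (I : DB CN RN Ind) :
    DB CN RN (Set Ind × ℕ) where
  concFact := fun A p => p ∈ qadom I ∧ ∃ a, p.1 = cls I a ∧ I.concFact A a
  roleFact := fun r p q => p ∈ qadom I ∧ q ∈ qadom I ∧
    ∃ a, p.1 = cls I a ∧ q.2 ≤ (I.succ r a ∩ q.1).ncard
  adom := qadom I

/-- ALCQ bisimulations between two databases. -/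
def IsALCQBisim2 {CN RN Ind₁ Ind₂ : Type} (I : DB CN RN Ind₁) (J : DB CN RN Ind₂)
    (S : Ind₁ → Ind₂ → Prop) : Prop :=
  (∀ a b, S a b → a ∈ I.adom ∧ b ∈ J.adom) ∧
  ∀ a b, S a b →
    (∀ A, I.concFact A a ↔ J.concFact A b) ∧
    (∀ r, ∀ D ⊆ I.succ r a, ∃ E ⊆ J.succ r b, ∃ f : Ind₁ → Ind₂,
        Set.BijOn f D E ∧ ∀ d ∈ D, S d (f d)) ∧
    (∀ r, ∀ E ⊆ J.succ r b, ∃ D ⊆ I.succ r a, ∃ f : Ind₁ → Ind₂,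
        Set.BijOn f D E ∧ ∀ d ∈ D, S d (f d))

/-!
Relating every element `a` of `I` to the copies `⟨[a], i⟩` is an ALCQ bisimulation between `I`
and `I'`: the `r`-successors of `a` lying in a class `[d]` are exactly as many as the copies of `[d]`
that `⟨[a], i⟩` points to, since bisimilar elements have equally many `r`-successors in each
class, and ranking those successors by a well-order matches them one-to-one with the copies.
Bisimulations between finitely branching databases preserve ALCQ concepts, so `p ∈ C^I` iff
`⟨[p], 1⟩ ∈ C^{I'}`, which gives the equivalence of the two fitting conditions.
-/

open Set

section Rank

variable {α : Type*}

noncomputable def wellOrderRank (F : Set α) (d : α) : ℕ :=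
  (F ∩ {x | WellOrderingRel x d}).ncard + 1

lemma wellOrderRank_lt {F : Set α} (hF : F.Finite) {x y : α} (hx : x ∈ F)
    (h : WellOrderingRel x y) : wellOrderRank F x < wellOrderRank F y := by
  have hss : F ∩ {z | WellOrderingRel z x} ⊂ F ∩ {z | WellOrderingRel z y} :=
    ⟨fun z hz => ⟨hz.1, trans_of WellOrderingRel hz.2 h⟩,
      fun hsub => irrefl_of WellOrderingRel x (hsub ⟨hx, h⟩).2⟩
  simpa [wellOrderRank] using ncard_lt_ncard hss (hF.inter_of_left _)

lemma wellOrderRank_bijOn {F : Set α} (hF : F.Finite) :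
    BijOn (wellOrderRank F) F (Icc 1 F.ncard) := by
  have hmaps : MapsTo (wellOrderRank F) F (Icc 1 F.ncard) := by
    intro d hd
    have hbelow : F ∩ {x | WellOrderingRel x d} ⊆ F \ {d} :=
      fun x hx => ⟨hx.1, by rintro rfl; exact irrefl_of WellOrderingRel x hx.2⟩
    have hcard := ncard_le_ncard hbelow hF.sdiff
    rw [ncard_sdiff_singleton_of_mem hd] at hcard
    have hpos := (ncard_pos hF).2 ⟨d, hd⟩
    exact ⟨Nat.le_add_left 1 _, by unfold wellOrderRank; omega⟩
  have hinj : InjOn (wellOrderRank F) F := by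
    intro x hx y hy hxy
    rcases trichotomous_of WellOrderingRel x y with h | h | h
    · exact absurd hxy (wellOrderRank_lt hF hx h).ne
    · exact h
    · exact absurd hxy (wellOrderRank_lt hF hy h).ne'
  have himage : wellOrderRank F '' F = Icc 1 F.ncard :=
    eq_of_subset_of_ncard_le hmaps.image_subset
      (by rw [hinj.ncard_image, ncard_Icc_nat]; omega) (finite_Icc _ _)
  exact ⟨hmaps, hinj, himage.symm.subset⟩

end Rank

lemma Set.BijOn.exists_bijOn_inv_of_forall_rel {α β : Type*} [Nonempty α] {f : α → β}
    {D : Set α} {E : Set β} (hf : BijOn f D E) {R : α → β → Prop} (hR : ∀ d ∈ D, R d (f d)) :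
    ∃ g : β → α, BijOn g E D ∧ ∀ e ∈ E, R (g e) e := by
  have hinv := hf.invOn_invFunOn
  refine ⟨Function.invFunOn f D, hf.symm hinv.symm, fun e he => ?_⟩
  simpa only [hinv.2 he] using hR _ ((hf.symm hinv.symm).mapsTo he)

section Bisimulation

variable {CN RN Ind₁ Ind₂ Ind₃ : Type} {I : DB CN RN Ind₁} {J : DB CN RN Ind₂}
  {K : DB CN RN Ind₃}

lemma IsALCQBisim2.flip {S : Ind₁ → Ind₂ → Prop} (hS : IsALCQBisim2 I J S) :
    IsALCQBisim2 J I (flip S) := by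
  refine ⟨fun b a h => (hS.1 a b h).symm, fun b a hab => ?_⟩
  have : Nonempty Ind₁ := ⟨a⟩
  have : Nonempty Ind₂ := ⟨b⟩
  obtain ⟨hA, hforth, hback⟩ := hS.2 a b hab
  refine ⟨fun A => (hA A).symm, fun r E hE => ?_, fun r D hD => ?_⟩
  · obtain ⟨D, hD, f, hf, hfS⟩ := hback r E hE
    obtain ⟨g, hg, hgS⟩ := hf.exists_bijOn_inv_of_forall_rel hfS
    exact ⟨D, hD, g, hg, hgS⟩
  · obtain ⟨E, hE, f, hf, hfS⟩ := hforth r D hD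
    obtain ⟨g, hg, hgS⟩ := hf.exists_bijOn_inv_of_forall_rel hfS
    exact ⟨E, hE, g, hg, hgS⟩

lemma IsALCQBisim2.comp {S : Ind₁ → Ind₂ → Prop} {T : Ind₂ → Ind₃ → Prop}
    (hS : IsALCQBisim2 I J S) (hT : IsALCQBisim2 J K T) :
    IsALCQBisim2 I K (Relation.Comp S T) := by
  refine ⟨fun a c ⟨b, hab, hbc⟩ => ⟨(hS.1 a b hab).1, (hT.1 b c hbc).2⟩, ?_⟩
  rintro a c ⟨b, hab, hbc⟩
  obtain ⟨hA₁, hforth₁, hback₁⟩ := hS.2 a b hab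
  obtain ⟨hA₂, hforth₂, hback₂⟩ := hT.2 b c hbc
  refine ⟨fun A => (hA₁ A).trans (hA₂ A), fun r D hD => ?_, fun r F hF => ?_⟩
  · obtain ⟨E, hE, f, hf, hfS⟩ := hforth₁ r D hD
    obtain ⟨F, hF, g, hg, hgT⟩ := hforth₂ r E hE
    exact ⟨F, hF, g ∘ f, hg.comp hf, fun d hd => ⟨f d, hfS d hd, hgT _ (hf.mapsTo hd)⟩⟩
  · obtain ⟨E, hE, g, hg, hgT⟩ := hback₂ r F hF
    obtain ⟨D, hD, f, hf, hfS⟩ := hback₁ r E hE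
    exact ⟨D, hD, g ∘ f, hg.comp hf, fun d hd => ⟨f d, hfS d hd, hgT _ (hf.mapsTo hd)⟩⟩

lemma IsALCQBisim2.finite_succ {S : Ind₁ → Ind₂ → Prop} (hS : IsALCQBisim2 I J S) {a : Ind₁}
    {b : Ind₂} (hab : S a b) (r : RN) (ha : (I.succ r a).Finite) : (J.succ r b).Finite := by
  obtain ⟨D, hD, f, hf, -⟩ := (hS.2 a b hab).2.2 r (J.succ r b) subset_rfl
  exact hf.image_eq ▸ (ha.subset hD).image f

lemma IsALCQBisim2.ncard_succ_inter_eq {S : Ind₁ → Ind₂ → Prop} (hS : IsALCQBisim2 I J S)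
    {X : Set Ind₁} {Y : Set Ind₂} (hXY : ∀ a b, S a b → (a ∈ X ↔ b ∈ Y)) {a : Ind₁} {b : Ind₂}
    (hab : S a b) (r : RN) (ha : (I.succ r a).Finite) :
    (I.succ r a ∩ X).ncard = (J.succ r b ∩ Y).ncard := by
  have hb := hS.finite_succ hab r ha
  obtain ⟨-, hforth, hback⟩ := hS.2 a b hab
  apply le_antisymm
  · obtain ⟨E, hE, f, hf, hfS⟩ := hforth r _ inter_subset_left
    rw [hf.ncard_eq]
    refine ncard_le_ncard (fun e he => ⟨hE he, ?_⟩) (hb.inter_of_left _)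
    obtain ⟨d, hd, rfl⟩ := hf.surjOn he
    exact (hXY _ _ (hfS d hd)).1 hd.2
  · obtain ⟨D, hD, f, hf, hfS⟩ := hback r _ inter_subset_left
    rw [← hf.ncard_eq]
    exact ncard_le_ncard (fun d hd => ⟨hD hd, (hXY _ _ (hfS d hd)).2 (hf.mapsTo hd).2⟩)
      (ha.inter_of_left _)

lemma IsALCQBisim2.of_bijOn_succ {S : Ind₁ → Ind₂ → Prop}
    (hdom : ∀ a b, S a b → a ∈ I.adom ∧ b ∈ J.adom)
    (hconc : ∀ a b, S a b → ∀ A, I.concFact A a ↔ J.concFact A b)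
    (hsucc : ∀ a b, S a b → ∀ r, ∃ f : Ind₁ → Ind₂,
      BijOn f (I.succ r a) (J.succ r b) ∧ ∀ d ∈ I.succ r a, S d (f d)) :
    IsALCQBisim2 I J S := by
  refine ⟨hdom, fun a b hab => ⟨hconc a b hab, fun r D hD => ?_, fun r E hE => ?_⟩⟩ <;>
    obtain ⟨f, hf, hfS⟩ := hsucc a b hab r
  · refine ⟨f '' D, ?_, f, (hf.injOn.mono hD).bijOn_image, fun d hd => hfS d (hD hd)⟩
    exact (image_mono hD).trans hf.image_eq.subset
  · refine ⟨I.succ r a ∩ f ⁻¹' E, inter_subset_left, f, ⟨fun d hd => hd.2,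
      hf.injOn.mono inter_subset_left, fun e he => ?_⟩, fun d hd => hfS d hd.1⟩
    obtain ⟨d, hd, rfl⟩ := hf.surjOn (hE he)
    exact ⟨d, ⟨hd, he⟩, rfl⟩

end Bisimulation

namespace ALCQ

variable {CN RN Ind₁ Ind₂ : Type} {I : DB CN RN Ind₁} {J : DB CN RN Ind₂}

theorem mem_sem_iff_of_isALCQBisim2 (hI : ∀ r a, (I.succ r a).Finite)
    {S : Ind₁ → Ind₂ → Prop} (hS : IsALCQBisim2 I J S) (C : ALCQ CN RN) {a : Ind₁} {b : Ind₂}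
    (hab : S a b) : a ∈ C.sem I ↔ b ∈ C.sem J := by
  induction C generalizing a b with
  | top => exact iff_of_true (hS.1 a b hab).1 (hS.1 a b hab).2
  | atom A =>
    simp only [sem, mem_ofPred_eq, (hS.1 a b hab).1, (hS.1 a b hab).2, (hS.2 a b hab).1 A]
  | neg C ih =>
    simp only [sem, mem_sdiff, (hS.1 a b hab).1, (hS.1 a b hab).2, ih hab]
  | inter C D ihC ihD => simp only [sem, mem_inter_iff, ihC hab, ihD hab]
  | ge n r C ih | le n r C ih =>
    simp only [sem, mem_ofPred_eq, (hS.1 a b hab).1, (hS.1 a b hab).2,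
      hS.ncard_succ_inter_eq (fun _ _ => ih) hab r (hI r a)]

end ALCQ

lemma fits_iff_fits_image {CN RN Ind₁ Ind₂ : Type} {I : DB CN RN Ind₁} {J : DB CN RN Ind₂}
    {C : ALCQ CN RN} {P N : Set Ind₁} (g : Ind₁ → Ind₂)
    (hg : ∀ a ∈ P ∪ N, a ∈ C.sem I ↔ g a ∈ C.sem J) :
    Fits I C P N ↔ Fits J C (g '' P) (g '' N) := by
  simp only [Fits, forall_mem_image]
  exact and_congr (forall₂_congr fun a ha => hg a (.inl ha))
    (forall₂_congr fun a ha => not_congr (hg a (.inr ha)))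

section Quotient

variable {CN RN Ind : Type} {I : DB CN RN Ind}

lemma Bisimilar.refl (hrole : ∀ r a b, I.roleFact r a b → a ∈ I.adom ∧ b ∈ I.adom) {a : Ind}
    (ha : a ∈ I.adom) : Bisimilar I a a := by
  refine ⟨fun x y => x = y ∧ x ∈ I.adom, ⟨fun x y ⟨h, hx⟩ => ⟨hx, h ▸ hx⟩, ?_⟩, rfl, ha⟩
  rintro x _ ⟨rfl, -⟩
  exact ⟨fun _ => Iff.rfl,
    fun r D hD => ⟨D, hD, id, bijOn_id D, fun d hd => ⟨rfl, (hrole r x d (hD hd)).2⟩⟩,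
    fun r E hE => ⟨E, hE, id, bijOn_id E, fun d hd => ⟨rfl, (hrole r x d (hE hd)).2⟩⟩⟩

lemma Bisimilar.symm {a b : Ind} (h : Bisimilar I a b) : Bisimilar I b a :=
  let ⟨S, hS, hab⟩ := h
  ⟨flip S, IsALCQBisim2.flip hS, hab⟩

lemma Bisimilar.trans {a b c : Ind} (h₁ : Bisimilar I a b) (h₂ : Bisimilar I b c) :
    Bisimilar I a c :=
  let ⟨S, hS, hab⟩ := h₁
  let ⟨T, hT, hbc⟩ := h₂
  ⟨Relation.Comp S T, IsALCQBisim2.comp hS hT, b, hab, hbc⟩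

lemma isALCQBisim_bisimilar : IsALCQBisim I (Bisimilar I) := by
  refine ⟨fun a b ⟨S, hS, hab⟩ => hS.1 a b hab, fun a b ⟨S, hS, hab⟩ => ?_⟩
  obtain ⟨hA, hforth, hback⟩ := hS.2 a b hab
  refine ⟨hA, fun r D hD => ?_, fun r E hE => ?_⟩
  · obtain ⟨E, hE, f, hf, hfS⟩ := hforth r D hD
    exact ⟨E, hE, f, hf, fun d hd => ⟨S, hS, hfS d hd⟩⟩
  · obtain ⟨D, hD, f, hf, hfS⟩ := hback r E hE
    exact ⟨D, hD, f, hf, fun d hd => ⟨S, hS, hfS d hd⟩⟩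

lemma mem_cls_self (hrole : ∀ r a b, I.roleFact r a b → a ∈ I.adom ∧ b ∈ I.adom) {a : Ind}
    (ha : a ∈ I.adom) : a ∈ cls I a :=
  Bisimilar.refl hrole ha

lemma bisimilar_of_cls_eq (hrole : ∀ r a b, I.roleFact r a b → a ∈ I.adom ∧ b ∈ I.adom)
    {a b : Ind} (hb : b ∈ I.adom) (h : cls I a = cls I b) : Bisimilar I a b :=
  show b ∈ cls I a from h ▸ mem_cls_self hrole hb

lemma cls_eq_of_bisimilar {a b : Ind} (h : Bisimilar I a b) : cls I a = cls I b :=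
  ext fun _ => ⟨h.symm.trans, h.trans⟩

noncomputable def succCopy (I : DB CN RN Ind) (r : RN) (a d : Ind) : Set Ind × ℕ :=
  (cls I d, wellOrderRank (I.succ r a ∩ cls I d) d)

variable (hfin : I.adom.Finite) (hrole : ∀ r a b, I.roleFact r a b → a ∈ I.adom ∧ b ∈ I.adom)
include hfin hrole

lemma finite_succ (r : RN) (a : Ind) : (I.succ r a).Finite :=
  hfin.subset fun b hb => (hrole r a b hb).2

lemma ncard_succ_inter_le_maxCnt {b : Ind} (hb : b ∈ I.adom) (r : RN) (X : Set Ind) :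
    (I.succ r b ∩ X).ncard ≤ maxCnt I X := by
  refine le_csSup ⟨I.adom.ncard, ?_⟩ ⟨b, hb, r, rfl⟩
  rintro n ⟨c, -, r', rfl⟩
  exact ncard_le_ncard (inter_subset_left.trans fun d hd => (hrole r' c d hd).2) hfin

lemma Bisimilar.ncard_succ_inter_cls_eq {a b : Ind} (h : Bisimilar I a b) (r : RN) (d : Ind) :
    (I.succ r a ∩ cls I d).ncard = (I.succ r b ∩ cls I d).ncard :=
  IsALCQBisim2.ncard_succ_inter_eq isALCQBisim_bisimilar
    (fun _ _ hxy => ⟨fun hx => hx.trans hxy, fun hy => hy.trans hxy.symm⟩) h r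
    (finite_succ hfin hrole r a)

lemma succCopy_bijOn {a : Ind} (ha : a ∈ I.adom) {p : Set Ind × ℕ} (hp : p ∈ qadom I)
    (hpa : p.1 = cls I a) (r : RN) :
    BijOn (succCopy I r a) (I.succ r a) ((quotDB I).succ r p) := by
  have hrank (d : Ind) := wellOrderRank_bijOn ((finite_succ hfin hrole r a).inter_of_left (cls I d))
  have hself {d : Ind} (hd : d ∈ I.succ r a) : d ∈ I.succ r a ∩ cls I d :=
    ⟨hd, mem_cls_self hrole (hrole r a d hd).2⟩
  refine ⟨fun d hd => ?_, fun x hx y hy hxy => ?_, fun ⟨X, i⟩ hq => ?_⟩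
  · have hi := (hrank d).mapsTo (hself hd)
    refine ⟨hp, ⟨d, (hrole r a d hd).2, rfl, hi.1, ?_⟩, a, hpa, hi.2⟩
    exact hi.2.trans ((ncard_succ_inter_le_maxCnt hfin hrole ha r _).trans (le_max_right _ _))
  · obtain ⟨hcls, hi⟩ := Prod.ext_iff.1 hxy
    dsimp only [succCopy] at hcls hi
    rw [hcls] at hi
    exact (hrank y).injOn (hcls ▸ hself hx) (hself hy) hi
  · obtain ⟨-, ⟨d₀, -, rfl, hi₁, -⟩, a', hpa', hi₂⟩ := hq
    have ha' := bisimilar_of_cls_eq hrole ha (hpa'.symm.trans hpa)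
    rw [ha'.ncard_succ_inter_cls_eq hfin hrole] at hi₂
    obtain ⟨d, ⟨hd, hdd₀⟩, rfl⟩ := (hrank d₀).surjOn ⟨hi₁, hi₂⟩
    refine ⟨d, hd, ?_⟩
    simp only [succCopy, cls_eq_of_bisimilar hdd₀]

lemma quot_isALCQBisim2 :
    IsALCQBisim2 I (quotDB I) (fun a p => a ∈ I.adom ∧ p ∈ qadom I ∧ p.1 = cls I a) := by
  refine .of_bijOn_succ (fun a p h => ⟨h.1, h.2.1⟩) (fun a p ⟨ha, hp, hpa⟩ A => ?_)
    (fun a p ⟨ha, hp, hpa⟩ r => ⟨succCopy I r a, succCopy_bijOn hfin hrole ha hp hpa r, ?_⟩)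
  · refine ⟨fun h => ⟨hp, a, hpa, h⟩, fun ⟨_, a', hpa', h⟩ => ?_⟩
    have ha' := bisimilar_of_cls_eq hrole ha (hpa'.symm.trans hpa)
    exact ((isALCQBisim_bisimilar.2 a' a ha').1 A).1 h
  · intro d hd
    exact ⟨(hrole r a d hd).2, ((succCopy_bijOn hfin hrole ha hp hpa r).mapsTo hd).2.1, rfl⟩

end Quotient

theorem stmt10_general {CN RN Ind : Type} (I : DB CN RN Ind)
    (hfin : I.adom.Finite)
    (hrole : ∀ r a b, I.roleFact r a b → a ∈ I.adom ∧ b ∈ I.adom)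
    (P N : Set Ind) (hP : P ⊆ I.adom) (hN : N ⊆ I.adom)
    (C : ALCQ CN RN) :
    Fits I C P N ↔
      Fits (quotDB I) C ((fun p => (cls I p, 1)) '' P)
        ((fun n => (cls I n, 1)) '' N) := by
  refine fits_iff_fits_image _ fun a hPN => ?_
  have ha : a ∈ I.adom := hPN.elim (@hP a) (@hN a)
  exact C.mem_sem_iff_of_isALCQBisim2 (finite_succ hfin hrole) (quot_isALCQBisim2 hfin hrole)
    ⟨ha, ⟨a, ha, rfl, le_rfl, le_max_left _ _⟩, rfl⟩

theorem stmt10 {CN RN Ind : Type} (I : DB CN RN Ind)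
    (hfin : I.adom.Finite)
    (hrole : ∀ r a b, I.roleFact r a b → a ∈ I.adom ∧ b ∈ I.adom)
    (hconc : ∀ A a, I.concFact A a → a ∈ I.adom)
    (P N : Set Ind) (hP : P ⊆ I.adom) (hN : N ⊆ I.adom)
    (C : ALCQ CN RN) :
    Fits I C P N ↔
      Fits (quotDB I) C ((fun p => (cls I p, 1)) '' P)
        ((fun n => (cls I n, 1)) '' N) :=
  stmt10_general I hfin hrole P N hP hN C
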